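/- arXiv:1905.06891 — 2 statements merged into one kernel-verified Lean document; each statement's English description precedes it below -/
import Mathlib

section
/- Let n ≥ 3, let K ⊆ ℝⁿ be a proper subdual cone, let A ∈ ℝ^{n×n} be symmetric, and let {v¹, …, vⁿ} be an orthonormal system of eigenvectors of A with A v¹ = λ v¹ and A vʲ = μ vʲ for j = 2, …, n, where λ < μ. If v¹ ∈ K*, then the sublevel set [φ_A ≤ c] = {x ∈ int(K) : ⟨Ax, x⟩ ≤ c‖x‖²} is convex for every c ∈ ℝ (i.e., q_A is spherically quasi-convex). -/
open scoped RealInnerProductSpace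

/-- The quadratic form `x ↦ ⟨A x, x⟩` associated with a matrix `A`. -/
noncomputable def quadForm {n : ℕ} (A : Matrix (Fin n) (Fin n) ℝ)
    (x : EuclideanSpace ℝ (Fin n)) : ℝ :=
  ⟪Matrix.toEuclideanLin A x, x⟫

/-- `K` is a cone: closed under multiplication by positive scalars. -/
def IsCone {n : ℕ} (K : Set (EuclideanSpace ℝ (Fin n))) : Prop :=
  ∀ ⦃t : ℝ⦄, 0 < t → ∀ ⦃x⦄, x ∈ K → t • x ∈ K

/-- A proper cone: a pointed closed convex cone with nonempty interior. -/
def IsProperCone {n : ℕ} (K : Set (EuclideanSpace ℝ (Fin n))) : Prop :=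
  IsCone K ∧ Convex ℝ K ∧ IsClosed K ∧ K ∩ (-K) ⊆ {0} ∧ (interior K).Nonempty

/-- The dual cone `K* = {u : ⟨u, y⟩ ≥ 0 for all y ∈ K}`. -/
def dualCone {n : ℕ} (K : Set (EuclideanSpace ℝ (Fin n))) : Set (EuclideanSpace ℝ (Fin n)) :=
  {u | ∀ y ∈ K, 0 ≤ ⟪u, y⟫}

/-- The sublevel set `[φ_A ≤ c] = {x ∈ int K : ⟨A x, x⟩ ≤ c ‖x‖²}`. -/
noncomputable def sublevel {n : ℕ} (A : Matrix (Fin n) (Fin n) ℝ)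
    (K : Set (EuclideanSpace ℝ (Fin n))) (c : ℝ) : Set (EuclideanSpace ℝ (Fin n)) :=
  {x ∈ interior K | quadForm A x ≤ c * ‖x‖ ^ 2}

/-! With `u = v¹`, the spectral data give `q_A(x) = μ‖x‖² + (λ - μ)⟨u, x⟩²`. On the half-space
`⟨u, x⟩ ≥ 0`, which contains `K` because `u ∈ K*`, the inequality `q_A(x) ≤ c‖x‖²` is therefore
equivalent to `√(μ - c) ‖x‖ ≤ √(μ - λ) ⟨u, x⟩`, whose solution set is a convex (ice-cream) cone.
Intersecting with the convex set `int K` gives the convexity of `[φ_A ≤ c]`. -/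

theorem Real.mul_sq_le_mul_sq_iff_sqrt_mul_le_sqrt_mul {p q r t : ℝ}
    (hq : 0 ≤ q) (hr : 0 ≤ r) (ht : 0 ≤ t) :
    p * r ^ 2 ≤ q * t ^ 2 ↔ √p * r ≤ √q * t := by
  rcases le_total p 0 with hp | hp
  · -- for `p ≤ 0` both sides hold, the right one because `√p = 0`
    rw [Real.sqrt_eq_zero'.2 hp, zero_mul]
    exact iff_of_true (by nlinarith [sq_nonneg r, sq_nonneg t]) (by positivity)
  · rw [← pow_le_pow_iff_left₀ (a := √p * r) (by positivity) (by positivity) two_ne_zero,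
      mul_pow, mul_pow, Real.sq_sqrt hp, Real.sq_sqrt hq]

section InnerProductSpace

variable {E : Type*} [NormedAddCommGroup E] [InnerProductSpace ℝ E]

theorem convex_setOf_mul_norm_le_inner (u : E) {a : ℝ} (ha : 0 ≤ a) :
    Convex ℝ {z : E | a * ‖z‖ ≤ ⟪u, z⟫} := by
  have hconvex : ConvexOn ℝ Set.univ fun z : E => a * ‖z‖ - ⟪u, z⟫ :=
    ((convexOn_norm convex_univ).smul ha).sub ((innerₗ E u).concaveOn convex_univ)
  simpa only [sub_nonpos, Set.mem_univ, true_and] using hconvex.convex_le 0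

theorem Convex.sep_mul_norm_sq_add_mul_inner_sq_le {S : Set E} (hS : Convex ℝ S) {u : E}
    (hu : ∀ z ∈ S, 0 ≤ ⟪u, z⟫) {lam mu : ℝ} (hlm : lam ≤ mu) (c : ℝ) :
    Convex ℝ {z ∈ S | mu * ‖z‖ ^ 2 + (lam - mu) * ⟪u, z⟫ ^ 2 ≤ c * ‖z‖ ^ 2} := by
  have hcone : {z ∈ S | mu * ‖z‖ ^ 2 + (lam - mu) * ⟪u, z⟫ ^ 2 ≤ c * ‖z‖ ^ 2} =
      S ∩ {z | √(mu - c) * ‖z‖ ≤ ⟪√(mu - lam) • u, z⟫} := by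
    ext z
    simp only [Set.mem_inter_iff, Set.mem_ofPred_eq, real_inner_smul_left]
    refine and_congr_right fun hz => ?_
    rw [← Real.mul_sq_le_mul_sq_iff_sqrt_mul_le_sqrt_mul (sub_nonneg.2 hlm) (norm_nonneg z)
      (hu z hz)]
    constructor <;> intro h <;> linarith
  rw [hcone]
  exact hS.inter (convex_setOf_mul_norm_le_inner _ (Real.sqrt_nonneg _))

end InnerProductSpace

theorem Matrix.toEuclideanLin_apply_of_orthonormal_eigenvectors {n : ℕ}
    {A : Matrix (Fin n) (Fin n) ℝ} {v : Fin n → EuclideanSpace ℝ (Fin n)} (hv : Orthonormal ℝ v)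
    {i₀ : Fin n} {lam mu : ℝ} (h₀ : Matrix.toEuclideanLin A (v i₀) = lam • v i₀)
    (hrest : ∀ i, i ≠ i₀ → Matrix.toEuclideanLin A (v i) = mu • v i)
    (x : EuclideanSpace ℝ (Fin n)) :
    Matrix.toEuclideanLin A x = mu • x + ((lam - mu) * ⟪v i₀, x⟫) • v i₀ := by
  have : Nonempty (Fin n) := ⟨i₀⟩
  have hcard : Fintype.card (Fin n) = Module.finrank ℝ (EuclideanSpace ℝ (Fin n)) := by simp
  let S : EuclideanSpace ℝ (Fin n) →ₗ[ℝ] EuclideanSpace ℝ (Fin n) :=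
    mu • LinearMap.id + ((lam - mu) • (innerₗ _ (v i₀))).smulRight (v i₀)
  have hS : ∀ x, S x = mu • x + ((lam - mu) * ⟪v i₀, x⟫) • v i₀ := fun x => by
    simp [S, LinearMap.smulRight_apply]
  suffices Matrix.toEuclideanLin A = S by rw [this, hS]
  refine (basisOfOrthonormalOfCardEqFinrank hv hcard).ext fun i => ?_
  rw [coe_basisOfOrthonormalOfCardEqFinrank, hS]
  rcases eq_or_ne i i₀ with rfl | hi
  · rw [h₀, real_inner_self_eq_norm_sq, hv.1 i]
    module
  · rw [hrest i hi, hv.2 hi.symm]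
    module

theorem quadForm_eq_of_orthonormal_eigenvectors {n : ℕ}
    {A : Matrix (Fin n) (Fin n) ℝ} {v : Fin n → EuclideanSpace ℝ (Fin n)} (hv : Orthonormal ℝ v)
    {i₀ : Fin n} {lam mu : ℝ} (h₀ : Matrix.toEuclideanLin A (v i₀) = lam • v i₀)
    (hrest : ∀ i, i ≠ i₀ → Matrix.toEuclideanLin A (v i) = mu • v i)
    (x : EuclideanSpace ℝ (Fin n)) :
    quadForm A x = mu * ‖x‖ ^ 2 + (lam - mu) * ⟪v i₀, x⟫ ^ 2 := by
  rw [quadForm, Matrix.toEuclideanLin_apply_of_orthonormal_eigenvectors hv h₀ hrest,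
    inner_add_left, real_inner_smul_left, real_inner_smul_left, real_inner_self_eq_norm_sq]
  ring

theorem stmt17_general (n : ℕ) [NeZero n]
    (K : Set (EuclideanSpace ℝ (Fin n))) (hK : IsProperCone K)
    (A : Matrix (Fin n) (Fin n) ℝ)
    (v : Fin n → EuclideanSpace ℝ (Fin n)) (hv : Orthonormal ℝ v)
    (lam mu : ℝ) (hlm : lam < mu)
    (h1 : Matrix.toEuclideanLin A (v 0) = lam • v 0)
    (hrest : ∀ i : Fin n, i ≠ 0 → Matrix.toEuclideanLin A (v i) = mu • v i)
    (hv1 : v 0 ∈ dualCone K) :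
    ∀ c : ℝ, Convex ℝ (sublevel A K c) := by
  intro c
  have hsublevel : sublevel A K c =
      {z ∈ interior K | mu * ‖z‖ ^ 2 + (lam - mu) * ⟪v 0, z⟫ ^ 2 ≤ c * ‖z‖ ^ 2} := by
    simp only [sublevel, quadForm_eq_of_orthonormal_eigenvectors hv h1 hrest]
  rw [hsublevel]
  exact hK.2.1.interior.sep_mul_norm_sq_add_mul_inner_sq_le
    (fun z hz => hv1 z (interior_subset hz)) hlm.le c

/-- Corollary 5 of the paper: if `A` has eigenvalues `λ < μ = ⋯ = μ` with `v¹ ∈ K*`,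
then all sublevel sets `[φ_A ≤ c]` are convex (i.e. `q_A` is spherically quasi-convex). -/
theorem stmt17 (n : ℕ) [NeZero n] (hn : 3 ≤ n)
    (K : Set (EuclideanSpace ℝ (Fin n))) (hK : IsProperCone K) (hsub : K ⊆ dualCone K)
    (A : Matrix (Fin n) (Fin n) ℝ) (hA : A.IsSymm)
    (v : Fin n → EuclideanSpace ℝ (Fin n)) (hv : Orthonormal ℝ v)
    (lam mu : ℝ) (hlm : lam < mu)
    (h1 : Matrix.toEuclideanLin A (v 0) = lam • v 0)
    (hrest : ∀ i : Fin n, i ≠ 0 → Matrix.toEuclideanLin A (v i) = mu • v i)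
    (hv1 : v 0 ∈ dualCone K) :
    ∀ c : ℝ, Convex ℝ (sublevel A K c) :=
  stmt17_general n K hK A v hv lam mu hlm h1 hrest hv1
end

section
/- Let n ≥ 2, let L = {y ∈ ℝⁿ : y₁ ≥ √(y₂² + ⋯ + yₙ²)} be the Lorentz cone, let J = diag(1, −1, …, −1) ∈ ℝ^{n×n}, let A ∈ ℝ^{n×n} be symmetric with eigenvalues λ₁ ≤ λ₂ ≤ ⋯ ≤ λₙ (counted with multiplicity, with a corresponding orthonormal system of eigenvectors), and let v¹ be a unit eigenvector of A corresponding to λ₁. If v¹ ∈ L and there exists ρ ≥ 0 such that λ₂Iₙ − A − ρJ is positive semidefinite, then the sublevel set [φ_A ≤ c] = {x ∈ int(L) : ⟨Ax, x⟩ ≤ c‖x‖²} is convex for every c ∈ ℝ (i.e., q_A is spherically quasi-convex). -/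
/-!
In the eigenbasis, `q_A(x) - c‖x‖² = ∑ᵢ (λᵢ - c) ⟨vᵢ, x⟩²`. If `λ₂ ≤ c`, the semidefiniteness
of `λ₂Iₙ - A - ρJ` and `⟨Jx, x⟩ ≥ 0` on `L` give `q_A(x) ≤ λ₂‖x‖² ≤ c‖x‖²` on `L`, so the
sublevel set is all of `int(L)`. If `c < λ₂`, only the coefficient `λ₁ - c` can be negative, and
since `⟨v¹, x⟩ ≥ 0` on `L` (self-duality) the condition becomes the second-order cone constraint
`‖G x‖ ≤ √(c - λ₁)⁺ ⟨v¹, x⟩` for a linear map `G`, which cuts out a convex set.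
-/

open scoped RealInnerProductSpace

/-- `‖x²‖² = x₂² + ⋯ + xₙ²`, the squared norm of the tail of `x`. -/
noncomputable def tailNormSq {n : ℕ} [NeZero n] (x : EuclideanSpace ℝ (Fin n)) : ℝ :=
  ∑ i ∈ Finset.univ.erase 0, x i ^ 2

/-- The Lorentz cone `{y : √(y₂² + ⋯ + yₙ²) ≤ y₁}`. -/
noncomputable def lorentzCone (n : ℕ) [NeZero n] : Set (EuclideanSpace ℝ (Fin n)) :=
  {y | Real.sqrt (tailNormSq y) ≤ y 0}

open Matrix

theorem convex_setOf_norm_le_linearMap {E F : Type*} [AddCommGroup E] [Module ℝ E]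
    [SeminormedAddCommGroup F] [NormedSpace ℝ F] (g : E →ₗ[ℝ] F) (ℓ : E →ₗ[ℝ] ℝ) :
    Convex ℝ {x | ‖g x‖ ≤ ℓ x} := by
  simpa [sub_nonpos] using
    (((convexOn_norm convex_univ).comp_linearMap g).sub (ℓ.concaveOn convex_univ)).convex_le 0

theorem norm_sq_toEuclideanLin_diagonal {n : ℕ} (d : Fin n → ℝ) (x : EuclideanSpace ℝ (Fin n)) :
    ‖toEuclideanLin (diagonal d) x‖ ^ 2 = ∑ i, d i ^ 2 * x i ^ 2 := by
  simp [EuclideanSpace.real_norm_sq_eq, toLpLin_apply, mulVec_diagonal, mul_pow]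

open Finset in
theorem Finset.sum_mul_sq_sub_mul_sum_sq {ι : Type*} [Fintype ι] [DecidableEq ι] (i₀ : ι)
    (lam s : ι → ℝ) {c : ℝ} (hc : ∀ i ≠ i₀, c ≤ lam i) :
    ∑ i, lam i * s i ^ 2 - c * ∑ i, s i ^ 2 =
      ∑ i, max (lam i - c) 0 * s i ^ 2 - max (c - lam i₀) 0 * s i₀ ^ 2 := by
  have hterm (i : ι) : max (lam i - c) 0 * s i ^ 2 =
      (lam i - c) * s i ^ 2 + if i = i₀ then max (c - lam i₀) 0 * s i₀ ^ 2 else 0 := by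
    split_ifs with h
    · subst h
      have h := max_zero_sub_eq_self (lam i - c)
      rw [neg_sub] at h
      linear_combination s i ^ 2 * h
    · rw [max_eq_left (sub_nonneg.2 (hc i h)), add_zero]
  simp only [hterm, sum_add_distrib, sum_ite_eq', if_pos (mem_univ _), mul_sum, sub_mul,
    sum_sub_distrib, add_sub_cancel_right]

theorem OrthonormalBasis.inner_map_self_eq_sum {ι E : Type*} [Fintype ι] [NormedAddCommGroup E]
    [InnerProductSpace ℝ E] (b : OrthonormalBasis ι ℝ E) (T : E →ₗ[ℝ] E) (lam : ι → ℝ)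
    (heig : ∀ i, T (b i) = lam i • b i) (x : E) :
    ⟪T x, x⟫ = ∑ i, lam i * ⟪b i, x⟫ ^ 2 := by
  have hTx : T x = ∑ i, (lam i * ⟪b i, x⟫) • b i := by
    conv_lhs => rw [← b.sum_repr' x]
    simp only [map_sum, map_smul, heig, smul_smul, mul_comm]
  rw [hTx, sum_inner]
  refine Finset.sum_congr rfl fun i _ => ?_
  rw [real_inner_smul_left, mul_assoc, sq]

theorem Fin.sum_univ_eq_add_sum_erase_zero {n : ℕ} [NeZero n] (f : Fin n → ℝ) :
    ∑ i, f i = f 0 + ∑ i ∈ Finset.univ.erase 0, f i :=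
  (Finset.add_sum_erase _ f (Finset.mem_univ 0)).symm

theorem Orthonormal.exists_orthonormalBasis_coe_eq {ι E : Type*} [Fintype ι] [Nonempty ι]
    [NormedAddCommGroup E] [InnerProductSpace ℝ E] [FiniteDimensional ℝ E] {v : ι → E}
    (hv : Orthonormal ℝ v) (hcard : Fintype.card ι = Module.finrank ℝ E) :
    ∃ b : OrthonormalBasis ι ℝ E, ⇑b = v := by
  have hb := coe_basisOfOrthonormalOfCardEqFinrank hv hcard
  exact ⟨_, (Module.Basis.coe_toOrthonormalBasis _ (hb.symm ▸ hv)).trans hb⟩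

section QuadForm

variable {n : ℕ}

theorem quadForm_sub (A B : Matrix (Fin n) (Fin n) ℝ) (x : EuclideanSpace ℝ (Fin n)) :
    quadForm (A - B) x = quadForm A x - quadForm B x := by
  simp [quadForm, inner_sub_left]

theorem quadForm_smul (r : ℝ) (A : Matrix (Fin n) (Fin n) ℝ) (x : EuclideanSpace ℝ (Fin n)) :
    quadForm (r • A) x = r * quadForm A x := by
  simp [quadForm, real_inner_smul_left]

theorem quadForm_diagonal (d : Fin n → ℝ) (x : EuclideanSpace ℝ (Fin n)) :
    quadForm (diagonal d) x = ∑ i, d i * x i ^ 2 := by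
  simp [quadForm, toLpLin_apply, mulVec_diagonal, PiLp.inner_apply, sq, mul_left_comm]

theorem quadForm_one (x : EuclideanSpace ℝ (Fin n)) : quadForm 1 x = ‖x‖ ^ 2 := by
  simp [← diagonal_one, quadForm_diagonal, EuclideanSpace.real_norm_sq_eq]

theorem Matrix.PosSemidef.quadForm_nonneg {A : Matrix (Fin n) (Fin n) ℝ} (hA : A.PosSemidef)
    (x : EuclideanSpace ℝ (Fin n)) : 0 ≤ quadForm A x := by
  simpa [quadForm, toLpLin_apply, EuclideanSpace.inner_eq_star_dotProduct, dotProduct_comm]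
    using hA.dotProduct_mulVec_nonneg (WithLp.ofLp x)

end QuadForm

namespace lorentzCone

variable {n : ℕ} [NeZero n]

theorem mem_iff {x : EuclideanSpace ℝ (Fin n)} :
    x ∈ lorentzCone n ↔ 0 ≤ x 0 ∧ tailNormSq x ≤ x 0 ^ 2 :=
  Real.sqrt_le_iff

theorem eq_setOf_norm_le : lorentzCone n =
    {x | ‖toEuclideanLin (diagonal fun i : Fin n => if i = 0 then 0 else 1) x‖ ≤ x 0} := by
  ext x
  rw [lorentzCone, Set.mem_ofPred_eq, Set.mem_ofPred_eq, ← Real.sqrt_sq (norm_nonneg _),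
    norm_sq_toEuclideanLin_diagonal, Fin.sum_univ_eq_add_sum_erase_zero, tailNormSq]
  simp +contextual [Finset.sum_congr rfl]

theorem convex : Convex ℝ (lorentzCone n) := by
  rw [eq_setOf_norm_le]
  exact convex_setOf_norm_le_linearMap _
    (EuclideanSpace.proj 0 : EuclideanSpace ℝ (Fin n) →L[ℝ] ℝ).toLinearMap

theorem inner_nonneg {u x : EuclideanSpace ℝ (Fin n)} (hu : u ∈ lorentzCone n)
    (hx : x ∈ lorentzCone n) : 0 ≤ ⟪u, x⟫ := by
  obtain ⟨hu₀, hu⟩ := mem_iff.1 hu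
  obtain ⟨hx₀, hx⟩ := mem_iff.1 hx
  have hcs : (∑ i ∈ Finset.univ.erase 0, u i * x i) ^ 2 ≤ (u 0 * x 0) ^ 2 :=
    calc _ ≤ tailNormSq u * tailNormSq x := Finset.sum_mul_sq_le_sq_mul_sq _ _ _
      _ ≤ u 0 ^ 2 * x 0 ^ 2 :=
        mul_le_mul hu hx (Finset.sum_nonneg fun _ _ => sq_nonneg _) (sq_nonneg _)
      _ = _ := (mul_pow _ _ _).symm
  have hinner : ⟪u, x⟫ = u 0 * x 0 + ∑ i ∈ Finset.univ.erase 0, u i * x i := by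
    rw [← Fin.sum_univ_eq_add_sum_erase_zero fun i => u i * x i]
    simp [PiLp.inner_apply, mul_comm]
  rw [hinner]
  linarith [(abs_le_of_sq_le_sq' hcs (mul_nonneg hu₀ hx₀)).1]

theorem quadForm_diagonal_nonneg {x : EuclideanSpace ℝ (Fin n)} (hx : x ∈ lorentzCone n) :
    0 ≤ quadForm (diagonal fun i : Fin n => if i = 0 then 1 else -1) x := by
  rw [quadForm_diagonal, Fin.sum_univ_eq_add_sum_erase_zero, if_pos rfl, one_mul]
  have htail :
      ∑ i ∈ Finset.univ.erase 0, (if i = 0 then 1 else -1) * x i ^ 2 = -tailNormSq x := by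
    rw [tailNormSq, ← Finset.sum_neg_distrib]
    exact Finset.sum_congr rfl fun i hi => by rw [if_neg (Finset.ne_of_mem_erase hi), neg_one_mul]
  linarith [(mem_iff.1 hx).2]

theorem quadForm_le_of_posSemidef {A : Matrix (Fin n) (Fin n) ℝ} {μ ρ : ℝ} (hρ : 0 ≤ ρ)
    (hP : (μ • (1 : Matrix (Fin n) (Fin n) ℝ) - A -
      ρ • diagonal (fun i : Fin n => if i = 0 then (1 : ℝ) else -1)).PosSemidef)
    {x : EuclideanSpace ℝ (Fin n)} (hx : x ∈ lorentzCone n) : quadForm A x ≤ μ * ‖x‖ ^ 2 := by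
  have h := hP.quadForm_nonneg x
  rw [quadForm_sub, quadForm_sub, quadForm_smul, quadForm_smul, quadForm_one] at h
  nlinarith [mul_nonneg hρ (quadForm_diagonal_nonneg hx)]

theorem sublevel_eq_interior_of_posSemidef {A : Matrix (Fin n) (Fin n) ℝ} {μ ρ c : ℝ}
    (hρ : 0 ≤ ρ) (hP : (μ • (1 : Matrix (Fin n) (Fin n) ℝ) - A -
      ρ • diagonal (fun i : Fin n => if i = 0 then (1 : ℝ) else -1)).PosSemidef) (hc : μ ≤ c) :
    sublevel A (lorentzCone n) c = interior (lorentzCone n) :=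
  Set.sep_eq_self_iff_mem_true.2 fun _ hx =>
    (quadForm_le_of_posSemidef hρ hP (interior_subset hx)).trans
      (mul_le_mul_of_nonneg_right hc (sq_nonneg _))

theorem convex_sublevel_of_forall_ne_zero_le {A : Matrix (Fin n) (Fin n) ℝ}
    (b : OrthonormalBasis (Fin n) ℝ (EuclideanSpace ℝ (Fin n))) (lam : Fin n → ℝ)
    (heig : ∀ i, toEuclideanLin A (b i) = lam i • b i) (hb : b 0 ∈ lorentzCone n) {c : ℝ}
    (hc : ∀ i ≠ 0, c ≤ lam i) : Convex ℝ (sublevel A (lorentzCone n) c) := by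
  set β := √(max (c - lam 0) 0)
  let g := toEuclideanLin (diagonal fun i => √(max (lam i - c) 0)) ∘ₗ b.repr.toLinearMap
  have hkey (x) : quadForm A x - c * ‖x‖ ^ 2 = ‖g x‖ ^ 2 - (β * ⟪b 0, x⟫) ^ 2 := by
    rw [quadForm, b.inner_map_self_eq_sum _ lam heig, ← b.sum_sq_inner_right x,
      Finset.sum_mul_sq_sub_mul_sum_sq 0 _ _ hc, LinearMap.comp_apply,
      norm_sq_toEuclideanLin_diagonal]
    simp [β, mul_pow, Real.sq_sqrt, b.repr_apply_apply]
  have hset : sublevel A (lorentzCone n) c =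
      interior (lorentzCone n) ∩ {x | ‖g x‖ ≤ (β • innerₛₗ ℝ (b 0)) x} := by
    ext x
    refine and_congr_right fun hx => ?_
    have hpos : 0 ≤ β * ⟪b 0, x⟫ :=
      mul_nonneg (Real.sqrt_nonneg _) (lorentzCone.inner_nonneg hb (interior_subset hx))
    rw [Set.mem_ofPred_eq, LinearMap.smul_apply, innerₛₗ_apply_apply, smul_eq_mul,
      ← sub_nonpos, hkey, sub_nonpos, sq_le_sq₀ (norm_nonneg _) hpos]
  rw [hset]
  exact lorentzCone.convex.interior.inter (convex_setOf_norm_le_linearMap _ _)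

end lorentzCone

theorem stmt18_general (n : ℕ) [NeZero n]
    (A : Matrix (Fin n) (Fin n) ℝ)
    (v : Fin n → EuclideanSpace ℝ (Fin n)) (hv : Orthonormal ℝ v)
    (lam : Fin n → ℝ) (heig : ∀ i, Matrix.toEuclideanLin A (v i) = lam i • v i)
    (hmono : Monotone lam)
    (hv1 : v 0 ∈ lorentzCone n)
    (hρ : ∃ ρ : ℝ, 0 ≤ ρ ∧
      (lam 1 • (1 : Matrix (Fin n) (Fin n) ℝ) - A -
        ρ • Matrix.diagonal (fun i : Fin n => if i = 0 then (1 : ℝ) else -1)).PosSemidef) :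
    ∀ c : ℝ, Convex ℝ (sublevel A (lorentzCone n) c) := by
  intro c
  obtain ⟨ρ, hρ, hP⟩ := hρ
  obtain ⟨b, rfl⟩ := hv.exists_orthonormalBasis_coe_eq (by simp)
  rcases le_or_gt (lam 1) c with hc | hc
  · rw [lorentzCone.sublevel_eq_interior_of_posSemidef hρ hP hc]
    exact lorentzCone.convex.interior
  · exact lorentzCone.convex_sublevel_of_forall_ne_zero_le b lam heig hv1
      fun i hi => hc.le.trans (hmono (Fin.one_le_of_ne_zero hi))

/-- Proposition 5 of the paper: if `v¹ ∈ L` and `λ₂Iₙ - A - ρJ` is positive semidefinite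
for some `ρ ≥ 0`, then all sublevel sets `[φ_A ≤ c]` over the Lorentz cone are convex
(i.e. `q_A` is spherically quasi-convex). -/
theorem stmt18 (n : ℕ) [NeZero n] (hn : 2 ≤ n)
    (A : Matrix (Fin n) (Fin n) ℝ) (hA : A.IsSymm)
    (v : Fin n → EuclideanSpace ℝ (Fin n)) (hv : Orthonormal ℝ v)
    (lam : Fin n → ℝ) (heig : ∀ i, Matrix.toEuclideanLin A (v i) = lam i • v i)
    (hmono : Monotone lam)
    (hv1 : v 0 ∈ lorentzCone n)
    (hρ : ∃ ρ : ℝ, 0 ≤ ρ ∧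
      (lam 1 • (1 : Matrix (Fin n) (Fin n) ℝ) - A -
        ρ • Matrix.diagonal (fun i : Fin n => if i = 0 then (1 : ℝ) else -1)).PosSemidef) :
    ∀ c : ℝ, Convex ℝ (sublevel A (lorentzCone n) c) :=
  stmt18_general n A v hv lam heig hmono hv1 hρ
end
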